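/- Finite counter-model property: for every finite defeasible knowledge base K = T ∪ D and all ALC concepts C, D, if K has a modular model that does not satisfy C ⊏∼ D, then K has a ranked model with finite domain that does not satisfy C ⊏∼ D. -/

import Mathlib

namespace DefeasibleDL

/-- ALC concepts over concept names `C` and role names `R`. -/
inductive Concept (C R : Type) : Type where
  | top : Concept C R
  | bot : Concept C R
  | atom : C → Concept C R
  | neg : Concept C R → Concept C R
  | conj : Concept C R → Concept C R → Concept C R
  | disj : Concept C R → Concept C R → Concept C R
  | ex : R → Concept C R → Concept C R
  | all : R → Concept C R → Concept C R

/-- A classical interpretation with domain `D`. -/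
structure ClassInterp (C R D : Type) where
  interpC : C → Set D
  interpR : R → D → D → Prop

/-- Extension of a concept in a classical interpretation. -/
def ClassInterp.eval {C R D : Type} (I : ClassInterp C R D) : Concept C R → Set D
  | .top => Set.univ
  | .bot => ∅
  | .atom a => I.interpC a
  | .neg c => (I.eval c)ᶜ
  | .conj c d => I.eval c ∩ I.eval d
  | .disj c d => I.eval c ∪ I.eval d
  | .ex r c => {x | ∃ y, I.interpR r x y ∧ y ∈ I.eval c}
  | .all r c => {x | ∀ y, I.interpR r x y → y ∈ I.eval c}

/-- The `pref`-minimal elements of a set `S`. -/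
def minSet {D : Type} (pref : D → D → Prop) (S : Set D) : Set D :=
  {x | x ∈ S ∧ ∀ y ∈ S, ¬ pref y x}

/-- A preferential interpretation: a classical interpretation together with a smooth
strict partial order on the domain. -/
structure PrefInterp (C R D : Type) extends ClassInterp C R D where
  pref : D → D → Prop
  pref_irrefl : ∀ x, ¬ pref x x
  pref_trans : ∀ x y z, pref x y → pref y z → pref x z
  smooth : ∀ c : Concept C R, (toClassInterp.eval c).Nonempty →
      (minSet pref (toClassInterp.eval c)).Nonempty

/-- Satisfaction of a general concept inclusion `c ⊑ d`. -/
def PrefInterp.satGCI {C R D : Type} (P : PrefInterp C R D) (c d : Concept C R) : Prop :=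
  P.toClassInterp.eval c ⊆ P.toClassInterp.eval d

/-- Satisfaction of a defeasible concept inclusion `c ⊏∼ d`. -/
def PrefInterp.satDCI {C R D : Type} (P : PrefInterp C R D) (c d : Concept C R) : Prop :=
  minSet P.pref (P.toClassInterp.eval c) ⊆ P.toClassInterp.eval d

/-- A strict partial order is modular if its incomparability relation is transitive. -/
def Modular {D : Type} (pref : D → D → Prop) : Prop :=
  ∀ x y z : D, (¬ pref x y ∧ ¬ pref y x) → (¬ pref y z ∧ ¬ pref z y) →
    (¬ pref x z ∧ ¬ pref z x)

/-- Convexity of a height function: every value below an attained value is attained. -/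
def Convex {D : Type} (h : D → ℕ) : Prop :=
  ∀ (x : D) (j : ℕ), j < h x → ∃ y : D, h y = j

/-- `pref` is ranked by the convex height function `h`. -/
def RankedBy {D : Type} (pref : D → D → Prop) (h : D → ℕ) : Prop :=
  Convex h ∧ ∀ x y : D, pref x y ↔ h x < h y

/-- `pref` is a ranked order. -/
def IsRanked {D : Type} (pref : D → D → Prop) : Prop :=
  ∃ h : D → ℕ, RankedBy pref h

/-- Statements: general or defeasible concept inclusions. -/
inductive Stmt (C R : Type) : Type where
  | gci : Concept C R → Concept C R → Stmt C R
  | dci : Concept C R → Concept C R → Stmt C R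

def PrefInterp.satStmt {C R D : Type} (P : PrefInterp C R D) : Stmt C R → Prop
  | .gci c d => P.satGCI c d
  | .dci c d => P.satDCI c d

/-- A defeasible knowledge base: a finite TBox and a finite DTBox
(both represented as sets of pairs of concepts). -/
structure KB (C R : Type) where
  tbox : Set (Concept C R × Concept C R)
  dbox : Set (Concept C R × Concept C R)
  tbox_finite : tbox.Finite
  dbox_finite : dbox.Finite

/-- The statements of a knowledge base. -/
def KB.stmts {C R : Type} (K : KB C R) : Set (Stmt C R) :=
  {s | (∃ p ∈ K.tbox, s = Stmt.gci p.1 p.2) ∨ (∃ p ∈ K.dbox, s = Stmt.dci p.1 p.2)}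

/-- A preferential model of a knowledge base. -/
def PrefInterp.isModel {C R D : Type} (P : PrefInterp C R D) (K : KB C R) : Prop :=
  (∀ p ∈ K.tbox, P.satGCI p.1 p.2) ∧ (∀ p ∈ K.dbox, P.satDCI p.1 p.2)

/-- Preferential entailment. -/
def prefEntails {C R : Type} (K : KB C R) (s : Stmt C R) : Prop :=
  ∀ (D : Type) (_ : Nonempty D) (P : PrefInterp C R D), P.isModel K → P.satStmt s

/-- Modular entailment. -/
def modEntails {C R : Type} (K : KB C R) (s : Stmt C R) : Prop :=
  ∀ (D : Type) (_ : Nonempty D) (P : PrefInterp C R D),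
    Modular P.pref → P.isModel K → P.satStmt s

/-!
Filtration. Call two elements of a modular model equivalent when they satisfy the same
subconcepts of `K`, `c` and `d`; there are finitely many classes, and each class is the
extension of a concept (a conjunction of literals), so by smoothness it has a minimal
element. Ordering the classes by these representatives gives a finite modular, hence
ranked, order. Minimality transfers in both directions because a modular order satisfies
`x ≺ z → x ≺ y ∨ y ≺ z`: an element below a representative is below the representative of
its own class, which is impossible, or that representative lies below.
-/

section Order

variable {D : Type} {pref : D → D → Prop}

theorem Modular.pref_or_pref (htrans : ∀ x y z, pref x y → pref y z → pref x z)
    (hmod : Modular pref) {x z : D} (hxz : pref x z) (y : D) : pref x y ∨ pref y z := by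
  by_contra! h
  have hxy : ¬ pref x y ∧ ¬ pref y x := ⟨h.1, fun hyx => h.2 (htrans y x z hyx hxz)⟩
  have hyz : ¬ pref y z ∧ ¬ pref z y := ⟨h.2, fun hzy => h.1 (htrans x z y hxz hzy)⟩
  exact (hmod x y z hxy hyz).1 hxz

theorem Modular.comp {E : Type} (hmod : Modular pref) (f : E → D) :
    Modular fun a b => pref (f a) (f b) :=
  fun x y z => hmod (f x) (f y) (f z)

theorem minSet_nonempty_of_finite [Finite D] (hirr : ∀ x, ¬ pref x x)
    (htrans : ∀ x y z, pref x y → pref y z → pref x z) {S : Set D} (hS : S.Nonempty) :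
    (minSet pref S).Nonempty := by
  have : IsTrans D pref := ⟨htrans⟩
  have : Std.Irrefl pref := ⟨hirr⟩
  exact (Finite.wellFounded_of_trans_of_irrefl pref).has_min S hS

/-- Dense ranking: number the values of `g` in increasing order. -/
theorem exists_convex_lt_iff_lt [Finite D] (g : D → ℕ) :
    ∃ h : D → ℕ, Convex h ∧ ∀ x y, g x < g y ↔ h x < h y := by
  classical
  have := Fintype.ofFinite D
  set V := Finset.univ.image g
  set e := V.orderIsoOfFin rfl
  have hgV (x : D) : g x ∈ V := Finset.mem_image_of_mem g (Finset.mem_univ x)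
  refine ⟨fun x => e.symm ⟨g x, hgV x⟩, fun x j hj => ?_, fun x y => ?_⟩
  · have hjV : j < V.card := hj.trans (e.symm ⟨g x, hgV x⟩).isLt
    obtain ⟨y, -, hy⟩ := Finset.mem_image.1 (e ⟨j, hjV⟩).2
    refine ⟨y, ?_⟩
    have hey : (⟨g y, hgV y⟩ : V) = e ⟨j, hjV⟩ := Subtype.ext hy
    simp only [hey, OrderIso.symm_apply_apply]
  · change _ ↔ e.symm _ < e.symm _
    rw [e.symm.lt_iff_lt, ← Subtype.coe_lt_coe]

theorem Modular.isRanked [Finite D] (hirr : ∀ x, ¬ pref x x)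
    (htrans : ∀ x y z, pref x y → pref y z → pref x z) (hmod : Modular pref) :
    IsRanked pref := by
  have hmono {x y : D} (hxy : pref x y) : {z | pref z x} ⊂ {z | pref z y} :=
    Set.ssubset_iff_of_subset (fun z hzx => htrans z x y hzx hxy) |>.2 ⟨x, hxy, hirr x⟩
  have hanti {x y : D} (hxy : ¬ pref x y) : {z | pref z y} ⊆ {z | pref z x} :=
    fun z hzy => (hmod.pref_or_pref htrans hzy x).resolve_right hxy
  obtain ⟨h, hconv, hh⟩ := exists_convex_lt_iff_lt fun x => {z | pref z x}.ncard
  refine ⟨h, hconv, fun x y => ?_⟩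
  rw [← hh]
  refine ⟨fun hxy => Set.ncard_lt_ncard (hmono hxy), fun hlt => ?_⟩
  by_contra hxy
  exact (Set.ncard_le_ncard (hanti hxy)).not_gt hlt

end Order

section Filtration

variable {C R : Type}

def Concept.subconcepts : Concept C R → Set (Concept C R)
  | .top => {.top}
  | .bot => {.bot}
  | .atom a => {.atom a}
  | .neg e => insert (.neg e) e.subconcepts
  | .conj a b => insert (.conj a b) (a.subconcepts ∪ b.subconcepts)
  | .disj a b => insert (.disj a b) (a.subconcepts ∪ b.subconcepts)
  | .ex r e => insert (.ex r e) e.subconcepts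
  | .all r e => insert (.all r e) e.subconcepts

theorem Concept.subconcepts_finite (e : Concept C R) : e.subconcepts.Finite := by
  induction e with
  | top | bot | atom => exact Set.finite_singleton _
  | neg e ih | ex r e ih | all r e ih => exact ih.insert _
  | conj a b iha ihb | disj a b iha ihb => exact (iha.union ihb).insert _

namespace ClassInterp

variable {D : Type} (I : ClassInterp C R D) (S : Set (Concept C R))

def type (x : D) : Set (Concept C R) := {s ∈ S | x ∈ I.eval s}

def toFiltration : D → Set.range (I.type S) := Set.rangeFactorization (I.type S)

/-- The smallest filtration of `I` through `S`. -/
def filtration : ClassInterp C R (Set.range (I.type S)) where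
  interpC a := {t | Concept.atom a ∈ t.1}
  interpR r t t' := ∃ x y, I.toFiltration S x = t ∧ I.toFiltration S y = t' ∧ I.interpR r x y

variable {I S}

theorem toFiltration_eq_iff {x y : D} :
    I.toFiltration S x = I.toFiltration S y ↔ ∀ s ∈ S, x ∈ I.eval s ↔ y ∈ I.eval s := by
  simp only [toFiltration, Subtype.ext_iff, Set.rangeFactorization_coe, type, Set.ext_iff,
    Set.mem_ofPred_eq, and_congr_right_iff]

theorem mem_eval_iff_of_toFiltration_eq {x y : D} (h : I.toFiltration S x = I.toFiltration S y)
    {s : Concept C R} (hs : s ∈ S) : x ∈ I.eval s ↔ y ∈ I.eval s :=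
  toFiltration_eq_iff.1 h s hs

theorem toFiltration_surjective : Function.Surjective (I.toFiltration S) :=
  Set.rangeFactorization_surjective

theorem finite_range_type (hS : S.Finite) : Finite (Set.range (I.type S)) :=
  (hS.finite_subsets.subset (Set.range_subset_iff.2 fun _ _ hs => hs.1)).to_subtype

theorem toFiltration_mem_eval_filtration {s : Concept C R} (hs : s.subconcepts ⊆ S) (x : D) :
    I.toFiltration S x ∈ (I.filtration S).eval s ↔ x ∈ I.eval s := by
  induction s generalizing x with
  | top | bot => simp [eval]
  | atom a =>
    simp only [Concept.subconcepts, Set.singleton_subset_iff] at hs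
    simp [eval, filtration, toFiltration, type, hs]
  | neg e ih =>
    simp only [Concept.subconcepts, Set.insert_subset_iff] at hs
    simp [eval, ih hs.2]
  | conj a b iha ihb | disj a b iha ihb =>
    simp only [Concept.subconcepts, Set.insert_subset_iff, Set.union_subset_iff] at hs
    simp [eval, iha hs.2.1, ihb hs.2.2]
  | ex r e ih =>
    simp only [Concept.subconcepts, Set.insert_subset_iff] at hs
    constructor
    · rintro ⟨t, ⟨x', y, hx', rfl, hr⟩, hy⟩
      refine (mem_eval_iff_of_toFiltration_eq hx' hs.1).1 ⟨y, hr, ?_⟩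
      exact (ih hs.2 y).1 hy
    · rintro ⟨y, hr, hy⟩
      exact ⟨_, ⟨x, y, rfl, rfl, hr⟩, (ih hs.2 y).2 hy⟩
  | all r e ih =>
    simp only [Concept.subconcepts, Set.insert_subset_iff] at hs
    constructor
    · intro hx y hr
      exact (ih hs.2 y).1 (hx _ ⟨x, y, rfl, rfl, hr⟩)
    · rintro hx t ⟨x', y, hx', rfl, hr⟩
      exact (ih hs.2 y).2 ((mem_eval_iff_of_toFiltration_eq hx' hs.1).2 hx y hr)

theorem exists_eval_eq_setOf_forall_iff (hS : S.Finite) (x : D) :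
    ∃ e, I.eval e = {y | ∀ s ∈ S, y ∈ I.eval s ↔ x ∈ I.eval s} := by
  classical
  induction S, hS using Set.Finite.induction_on with
  | empty => exact ⟨.top, by simp [eval]⟩
  | @insert a S _ _ ih =>
    obtain ⟨e, he⟩ := ih
    refine ⟨.conj (if x ∈ I.eval a then a else .neg a) e, ?_⟩
    ext y
    by_cases hxa : x ∈ I.eval a <;> simp [eval, he, hxa]

theorem exists_eval_eq_fiber (hS : S.Finite) (x : D) :
    ∃ e, I.eval e = {y | I.toFiltration S y = I.toFiltration S x} := by
  simpa only [toFiltration_eq_iff] using exists_eval_eq_setOf_forall_iff hS x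

end ClassInterp

namespace PrefInterp

variable {D : Type} (M : PrefInterp C R D) {S : Set (Concept C R)}

theorem exists_mem_minSet_fiber (hS : S.Finite) (t : Set.range (M.type S)) :
    ∃ y, y ∈ minSet M.pref {y | M.toFiltration S y = t} := by
  obtain ⟨x, rfl⟩ := ClassInterp.toFiltration_surjective t
  obtain ⟨e, he⟩ := M.exists_eval_eq_fiber hS x
  rw [← he]
  exact M.smooth e (he ▸ ⟨x, rfl⟩)

noncomputable def rep (hS : S.Finite) (t : Set.range (M.type S)) : D :=
  (M.exists_mem_minSet_fiber hS t).choose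

theorem toFiltration_rep (hS : S.Finite) (t : Set.range (M.type S)) :
    M.toFiltration S (M.rep hS t) = t :=
  (M.exists_mem_minSet_fiber hS t).choose_spec.1

theorem not_pref_rep (hS : S.Finite) {t : Set.range (M.type S)} {y : D}
    (hy : M.toFiltration S y = t) :
    ¬ M.pref y (M.rep hS t) :=
  (M.exists_mem_minSet_fiber hS t).choose_spec.2 y hy

noncomputable def filtration (hS : S.Finite) : PrefInterp C R (Set.range (M.type S)) where
  toClassInterp := M.toClassInterp.filtration S
  pref t t' := M.pref (M.rep hS t) (M.rep hS t')
  pref_irrefl t := M.pref_irrefl _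
  pref_trans _ _ _ := M.pref_trans _ _ _
  smooth _ hne := by
    have := ClassInterp.finite_range_type (I := M.toClassInterp) hS
    exact minSet_nonempty_of_finite (pref := fun t t' => M.pref (M.rep hS t) (M.rep hS t'))
      (fun _ => M.pref_irrefl _) (fun _ _ _ => M.pref_trans _ _ _) hne

theorem isRanked_filtration (hS : S.Finite) (hmod : Modular M.pref) :
    IsRanked (M.filtration hS).pref := by
  have := ClassInterp.finite_range_type (I := M.toClassInterp) hS
  exact Modular.isRanked (fun t => M.pref_irrefl (M.rep hS t))
    (fun _ _ _ => M.pref_trans _ _ _) (hmod.comp _)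

variable {M} {hS : S.Finite}

theorem rep_mem_minSet (hmod : Modular M.pref) {c : Concept C R} (hc : c.subconcepts ⊆ S)
    {t : Set.range (M.type S)}
    (ht : t ∈ minSet (M.filtration hS).pref ((M.filtration hS).eval c)) :
    M.rep hS t ∈ minSet M.pref (M.eval c) := by
  have hrep : M.rep hS t ∈ M.eval c := by
    rw [← ClassInterp.toFiltration_mem_eval_filtration hc, toFiltration_rep]
    exact ht.1
  refine ⟨hrep, fun y hy hyt => ?_⟩
  rcases hmod.pref_or_pref M.pref_trans hyt (M.rep hS (M.toFiltration S y)) with h | h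
  · exact M.not_pref_rep hS rfl h
  · exact ht.2 _ ((ClassInterp.toFiltration_mem_eval_filtration hc y).2 hy) h

theorem toFiltration_mem_minSet (hmod : Modular M.pref) {c : Concept C R}
    (hc : c.subconcepts ⊆ S) {x : D} (hx : x ∈ minSet M.pref (M.eval c)) :
    M.toFiltration S x ∈ minSet (M.filtration hS).pref ((M.filtration hS).eval c) := by
  refine ⟨(ClassInterp.toFiltration_mem_eval_filtration hc x).2 hx.1, fun t ht hpref => ?_⟩
  rcases hmod.pref_or_pref M.pref_trans hpref x with h | h
  · refine hx.2 _ ?_ h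
    rw [← ClassInterp.toFiltration_mem_eval_filtration hc, toFiltration_rep]
    exact ht
  · exact M.not_pref_rep hS rfl h

theorem satGCI_filtration_iff {c d : Concept C R} (hc : c.subconcepts ⊆ S)
    (hd : d.subconcepts ⊆ S) : (M.filtration hS).satGCI c d ↔ M.satGCI c d := by
  refine ⟨fun h x hx => ?_, fun h t ht => ?_⟩
  · exact (ClassInterp.toFiltration_mem_eval_filtration hd x).1
      (h ((ClassInterp.toFiltration_mem_eval_filtration hc x).2 hx))
  · obtain ⟨x, rfl⟩ := ClassInterp.toFiltration_surjective t
    exact (ClassInterp.toFiltration_mem_eval_filtration hd x).2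
      (h ((ClassInterp.toFiltration_mem_eval_filtration hc x).1 ht))

theorem satDCI_filtration_iff (hmod : Modular M.pref) {c d : Concept C R}
    (hc : c.subconcepts ⊆ S) (hd : d.subconcepts ⊆ S) :
    (M.filtration hS).satDCI c d ↔ M.satDCI c d := by
  refine ⟨fun h x hx => ?_, fun h t ht => ?_⟩
  · exact (ClassInterp.toFiltration_mem_eval_filtration hd x).1
      (h (toFiltration_mem_minSet hmod hc hx))
  · rw [← toFiltration_rep M hS t]
    exact (ClassInterp.toFiltration_mem_eval_filtration hd _).2
      (h (rep_mem_minSet hmod hc ht))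

theorem isModel_filtration_iff (hmod : Modular M.pref) {K : KB C R}
    (hK : ∀ p ∈ K.tbox ∪ K.dbox, p.1.subconcepts ⊆ S ∧ p.2.subconcepts ⊆ S) :
    (M.filtration hS).isModel K ↔ M.isModel K := by
  have hT (p) (hp : p ∈ K.tbox) := hK p (Or.inl hp)
  have hD (p) (hp : p ∈ K.dbox) := hK p (Or.inr hp)
  unfold isModel
  refine and_congr (forall₂_congr fun p hp => ?_) (forall₂_congr fun p hp => ?_)
  · exact satGCI_filtration_iff (hT p hp).1 (hT p hp).2
  · exact satDCI_filtration_iff hmod (hD p hp).1 (hD p hp).2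

end PrefInterp

end Filtration

theorem finite_counter_model_property_general {C R : Type}
    (K : KB C R) (c d : Concept C R)
    (hmod : ∃ (D : Type) (_ : Nonempty D) (M : PrefInterp C R D),
      Modular M.pref ∧ M.isModel K ∧ ¬ M.satDCI c d) :
    ∃ (D : Type) (_ : Nonempty D) (_ : Finite D) (M : PrefInterp C R D),
      IsRanked M.pref ∧ M.isModel K ∧ ¬ M.satDCI c d := by
  obtain ⟨D, hD, M, hmodular, hK, hcd⟩ := hmod
  set P := insert (c, d) (K.tbox ∪ K.dbox)
  set S := ⋃ p ∈ P, p.1.subconcepts ∪ p.2.subconcepts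
  have hS : S.Finite := ((K.tbox_finite.union K.dbox_finite).insert _).biUnion
    fun p _ => p.1.subconcepts_finite.union p.2.subconcepts_finite
  have hP (p) (hp : p ∈ P) : p.1.subconcepts ⊆ S ∧ p.2.subconcepts ⊆ S :=
    Set.union_subset_iff.1 <|
      Set.subset_biUnion_of_mem (u := fun p => p.1.subconcepts ∪ p.2.subconcepts) hp
  obtain ⟨hc, hd⟩ := hP (c, d) (Set.mem_insert _ _)
  refine ⟨_, hD.map (M.toFiltration S), M.finite_range_type hS, M.filtration hS,
    M.isRanked_filtration hS hmodular,
    (PrefInterp.isModel_filtration_iff hmodular fun p hp => hP p (Or.inr hp)).2 hK, ?_⟩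
  rwa [PrefInterp.satDCI_filtration_iff hmodular hc hd]

/-- finite counter-model property: if `K` has a modular model not
satisfying `c ⊏∼ d`, then `K` has a ranked model with finite domain not
satisfying `c ⊏∼ d`. -/
theorem finite_counter_model_property {C R : Type} [Finite C] [Finite R]
    (K : KB C R) (c d : Concept C R)
    (hmod : ∃ (D : Type) (_ : Nonempty D) (M : PrefInterp C R D),
      Modular M.pref ∧ M.isModel K ∧ ¬ M.satDCI c d) :
    ∃ (D : Type) (_ : Nonempty D) (_ : Finite D) (M : PrefInterp C R D),
      IsRanked M.pref ∧ M.isModel K ∧ ¬ M.satDCI c d :=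
  finite_counter_model_property_general K c d hmod

end DefeasibleDL
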